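/- Let n ≥ 3 and let V, W be conformal Killing vectors on ℝⁿ. Then the function ⟨V,W⟩ = Σ_{a,b} (∂_b V^a)(∂_a W^b) − ((n−2)/n²)(div V)(div W) − (2/n) Σ_a V^a ∂_a(div W) − (2/n) Σ_a W^a ∂_a(div V) is constant on ℝⁿ. -/

import Mathlib

/-- Partial derivative in the `a`-th coordinate direction. -/
noncomputable def pd {n : ℕ} (a : Fin n) (f : (Fin n → ℝ) → ℝ) : (Fin n → ℝ) → ℝ :=
  fun x => fderiv ℝ f x (Pi.single a (1 : ℝ))

/-- The divergence `div V = Σ_a ∂_a V^a`. -/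
noncomputable def divg {n : ℕ} (V : (Fin n → ℝ) → (Fin n → ℝ)) : (Fin n → ℝ) → ℝ :=
  fun x => ∑ a, pd a (fun y => V y a) x

/-- A conformal Killing vector on ℝⁿ. -/
def IsCKV (n : ℕ) (V : (Fin n → ℝ) → (Fin n → ℝ)) : Prop :=
  ContDiff ℝ (⊤ : ℕ∞) V ∧ ∀ (a b : Fin n) (x : Fin n → ℝ),
    pd a (fun y => V y b) x + pd b (fun y => V y a) x
      = 2 / (n : ℝ) * divg V x * (if a = b then (1 : ℝ) else 0)

/-- Pairing `⟨V,W⟩ = Σ (∂_b V^a)(∂_a W^b) − ((n−2)/n²)(div V)(div W)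
  − (2/n) Σ V^a ∂_a(div W) − (2/n) Σ W^a ∂_a(div V)`. -/
noncomputable def pairing {n : ℕ} (V W : (Fin n → ℝ) → (Fin n → ℝ)) :
    (Fin n → ℝ) → ℝ :=
  fun x => (∑ a, ∑ b, pd b (fun y => V y a) x * pd a (fun y => W y b) x)
    - ((n : ℝ) - 2) / (n : ℝ) ^ 2 * divg V x * divg W x
    - 2 / (n : ℝ) * ∑ a, V x a * pd a (divg W) x
    - 2 / (n : ℝ) * ∑ a, W x a * pd a (divg V) x




namespace CKVaux

variable {n : ℕ}

lemma pd_contDiff {f : (Fin n → ℝ) → ℝ} (hf : ContDiff ℝ (⊤ : ℕ∞) f) (a : Fin n) :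
    ContDiff ℝ (⊤ : ℕ∞) (pd a f) := by
  have h1 : ContDiff ℝ (⊤ : ℕ∞) (fderiv ℝ f) := hf.fderiv_right (by simp)
  exact (ContinuousLinearMap.apply ℝ ℝ (Pi.single a (1:ℝ))).contDiff.comp h1

lemma comp_contDiff {V : (Fin n → ℝ) → (Fin n → ℝ)} (hV : ContDiff ℝ (⊤ : ℕ∞) V) (a : Fin n) :
    ContDiff ℝ (⊤ : ℕ∞) (fun y => V y a) :=
  (ContinuousLinearMap.proj (R := ℝ) (φ := fun _ : Fin n => ℝ) a).contDiff.comp hV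

lemma pd_add {f g : (Fin n → ℝ) → ℝ} {x : Fin n → ℝ} (hf : DifferentiableAt ℝ f x)
    (hg : DifferentiableAt ℝ g x) (a : Fin n) :
    pd a (fun y => f y + g y) x = pd a f x + pd a g x := by
  simp [pd, fderiv_fun_add hf hg]

lemma pd_sub {f g : (Fin n → ℝ) → ℝ} {x : Fin n → ℝ} (hf : DifferentiableAt ℝ f x)
    (hg : DifferentiableAt ℝ g x) (a : Fin n) :
    pd a (fun y => f y - g y) x = pd a f x - pd a g x := by
  simp [pd, fderiv_fun_sub hf hg]

lemma pd_mul {f g : (Fin n → ℝ) → ℝ} {x : Fin n → ℝ} (hf : DifferentiableAt ℝ f x)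
    (hg : DifferentiableAt ℝ g x) (a : Fin n) :
    pd a (fun y => f y * g y) x = pd a f x * g x + f x * pd a g x := by
  simp [pd, fderiv_fun_mul hf hg]; ring

lemma pd_sum {ι : Type*} (s : Finset ι) {f : ι → (Fin n → ℝ) → ℝ} {x : Fin n → ℝ}
    (hf : ∀ i ∈ s, DifferentiableAt ℝ (f i) x) (a : Fin n) :
    pd a (fun y => ∑ i ∈ s, f i y) x = ∑ i ∈ s, pd a (f i) x := by
  simp [pd, fderiv_fun_sum hf]

lemma pd_const_mul {f : (Fin n → ℝ) → ℝ} {x : Fin n → ℝ} (hf : DifferentiableAt ℝ f x)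
    (c : ℝ) (a : Fin n) :
    pd a (fun y => c * f y) x = c * pd a f x := by
  simp [pd, fderiv_const_mul hf]

lemma pd_pd {f : (Fin n → ℝ) → ℝ} (hf : ContDiff ℝ (⊤ : ℕ∞) f) (a b : Fin n) (x : Fin n → ℝ) :
    pd a (pd b f) x = fderiv ℝ (fderiv ℝ f) x (Pi.single a 1) (Pi.single b 1) := by
  have hfd : ContDiff ℝ (⊤ : ℕ∞) (fderiv ℝ f) := hf.fderiv_right (by simp)
  have h2 : DifferentiableAt ℝ (fderiv ℝ f) x := hfd.differentiable (by simp) x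
  have hc := ((ContinuousLinearMap.apply ℝ ℝ (Pi.single b (1:ℝ))).hasFDerivAt
      (x := fderiv ℝ f x)).comp x h2.hasFDerivAt
  have hc' : HasFDerivAt (pd b f)
      ((ContinuousLinearMap.apply ℝ ℝ (Pi.single b (1:ℝ))).comp
        (fderiv ℝ (fderiv ℝ f) x)) x := hc
  simp [pd, hc'.fderiv]

lemma pd_comm {f : (Fin n → ℝ) → ℝ} (hf : ContDiff ℝ (⊤ : ℕ∞) f) (a b : Fin n) (x : Fin n → ℝ) :
    pd a (pd b f) x = pd b (pd a f) x := by
  rw [pd_pd hf, pd_pd hf]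
  have hs : IsSymmSndFDerivAt ℝ f x := (hf.contDiffAt).isSymmSndFDerivAt (by simp; exact WithTop.coe_le_coe.mpr le_top)
  exact hs _ _

lemma divg_contDiff {V : (Fin n → ℝ) → (Fin n → ℝ)} (hV : ContDiff ℝ (⊤ : ℕ∞) V) :
    ContDiff ℝ (⊤ : ℕ∞) (divg V) := by
  have : divg V = fun x => ∑ a, pd a (fun y => V y a) x := rfl
  rw [this]
  exact ContDiff.sum fun a _ => pd_contDiff (comp_contDiff hV a) a

/-- differentiated CKV equation -/
lemma ckv_E {V : (Fin n → ℝ) → (Fin n → ℝ)} (hV : IsCKV n V) (a b c : Fin n)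
    (x : Fin n → ℝ) :
    pd c (pd a (fun y => V y b)) x + pd c (pd b (fun y => V y a)) x
      = 2 / (n : ℝ) * (if a = b then (1:ℝ) else 0) * pd c (divg V) x := by
  have hda : DifferentiableAt ℝ (pd a (fun y => V y b)) x :=
    (pd_contDiff (comp_contDiff hV.1 b) a).differentiable (by simp) x
  have hdb : DifferentiableAt ℝ (pd b (fun y => V y a)) x :=
    (pd_contDiff (comp_contDiff hV.1 a) b).differentiable (by simp) x
  have hfun : (fun y => pd a (fun z => V z b) y + pd b (fun z => V z a) y)
      = fun y => (2 / (n : ℝ) * (if a = b then (1:ℝ) else 0)) * divg V y := by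
    funext y
    rw [hV.2 a b y]; ring
  have := pd_add hda hdb c
  rw [hfun] at this
  rw [pd_const_mul ((divg_contDiff hV.1).differentiable (by simp) x) _ c] at this
  linarith [this]

/-- second derivative formula for a CKV -/
lemma ckv_S {V : (Fin n → ℝ) → (Fin n → ℝ)} (hV : IsCKV n V) (a b c : Fin n)
    (x : Fin n → ℝ) :
    pd a (pd b (fun y => V y c)) x
      = 1 / (n : ℝ) * ((if b = c then (1:ℝ) else 0) * pd a (divg V) x
        + (if a = c then (1:ℝ) else 0) * pd b (divg V) x
        - (if a = b then (1:ℝ) else 0) * pd c (divg V) x) := by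
  have e1 := ckv_E hV b c a x
  have e2 := ckv_E hV a c b x
  have e3 := ckv_E hV a b c x
  have c1 : pd b (pd a (fun y => V y c)) x = pd a (pd b (fun y => V y c)) x :=
    pd_comm (comp_contDiff hV.1 c) b a x
  have c2 : pd b (pd c (fun y => V y a)) x = pd c (pd b (fun y => V y a)) x :=
    pd_comm (comp_contDiff hV.1 a) b c x
  have c3 : pd c (pd a (fun y => V y b)) x = pd a (pd c (fun y => V y b)) x :=
    pd_comm (comp_contDiff hV.1 b) c a x
  rw [c1, c2] at e2
  rw [c3] at e3
  linear_combination (e1 + e2 - e3) / 2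

end CKVaux

namespace CKVaux

variable {n : ℕ}

lemma pd3_comm {f : (Fin n → ℝ) → ℝ} (hf : ContDiff ℝ (⊤ : ℕ∞) f) (d a b : Fin n) (x : Fin n → ℝ) :
    pd d (pd a (pd b f)) x = pd b (pd a (pd d f)) x := by
  rw [pd_comm (pd_contDiff hf b) d a x]
  have h1 : pd d (pd b f) = pd b (pd d f) := funext (pd_comm hf d b)
  rw [h1, pd_comm (pd_contDiff hf d) a b x]

lemma exists_third (hn : 3 ≤ n) (a b : Fin n) : ∃ c : Fin n, c ≠ a ∧ c ≠ b := by
  have h : ¬ (Finset.univ : Finset (Fin n)) ⊆ {a, b} := by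
    intro h
    have h1 := Finset.card_le_card h
    have h2 : ({a, b} : Finset (Fin n)).card ≤ 2 := by
      refine le_trans (Finset.card_insert_le _ _) ?_
      simp
    simp [Finset.card_univ] at h1
    omega
  obtain ⟨c, -, hc⟩ := Finset.not_subset.mp h
  simp only [Finset.mem_insert, Finset.mem_singleton, not_or] at hc
  exact ⟨c, hc.1, hc.2⟩

lemma ckv_sigma2 {V : (Fin n → ℝ) → (Fin n → ℝ)} (hV : IsCKV n V) (hn : 3 ≤ n)
    (d a : Fin n) (x : Fin n → ℝ) : pd d (pd a (divg V)) x = 0 := by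
  have hn0 : ((n : ℝ))⁻¹ ≠ 0 := by
    simp only [ne_eq, inv_eq_zero, Nat.cast_eq_zero]; omega
  have hσ : ContDiff ℝ (⊤ : ℕ∞) (divg V) := divg_contDiff hV.1
  have hdiff : ∀ (a : Fin n) (x : Fin n → ℝ), DifferentiableAt ℝ (pd a (divg V)) x :=
    fun a x => (pd_contDiff hσ a).differentiable (by simp) x
  -- derivative of the combination
  have hR : ∀ (k1 k2 k3 : ℝ) (a b c d : Fin n) (x : Fin n → ℝ),
      pd d (fun y => 1/(n:ℝ) * (k1 * pd a (divg V) y + k2 * pd b (divg V) y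
        - k3 * pd c (divg V) y)) x
      = 1/(n:ℝ) * (k1 * pd d (pd a (divg V)) x + k2 * pd d (pd b (divg V)) x
        - k3 * pd d (pd c (divg V)) x) := by
    intro k1 k2 k3 a b c d x
    rw [pd_const_mul ((((hdiff a x).const_mul k1).fun_add ((hdiff b x).const_mul k2)).fun_sub
      ((hdiff c x).const_mul k3)) _ d]
    rw [pd_sub (((hdiff a x).const_mul k1).fun_add ((hdiff b x).const_mul k2))
      ((hdiff c x).const_mul k3) d]
    rw [pd_add ((hdiff a x).const_mul k1) ((hdiff b x).const_mul k2) d]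
    rw [pd_const_mul (hdiff a x) _ d, pd_const_mul (hdiff b x) _ d,
      pd_const_mul (hdiff c x) _ d]
  have key : ∀ (a b c d : Fin n) (x : Fin n → ℝ),
      (if b = c then (1:ℝ) else 0) * pd d (pd a (divg V)) x
        + (if a = c then (1:ℝ) else 0) * pd d (pd b (divg V)) x
        - (if a = b then (1:ℝ) else 0) * pd d (pd c (divg V)) x
      = (if d = c then (1:ℝ) else 0) * pd b (pd a (divg V)) x
        + (if a = c then (1:ℝ) else 0) * pd b (pd d (divg V)) x
        - (if a = d then (1:ℝ) else 0) * pd b (pd c (divg V)) x := by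
    intro a b c d x
    have hfun : ∀ a b : Fin n, pd a (pd b (fun y => V y c))
        = fun y => 1/(n:ℝ) * ((if b = c then (1:ℝ) else 0) * pd a (divg V) y
          + (if a = c then (1:ℝ) else 0) * pd b (divg V) y
          - (if a = b then (1:ℝ) else 0) * pd c (divg V) y) :=
      fun a b => funext (ckv_S hV a b c)
  -- pd d applied to identity for (a,b); pd b applied to identity for (a,d)
    have h1 : pd d (pd a (pd b (fun y => V y c))) x
        = 1/(n:ℝ) * ((if b = c then (1:ℝ) else 0) * pd d (pd a (divg V)) x
          + (if a = c then (1:ℝ) else 0) * pd d (pd b (divg V)) x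
          - (if a = b then (1:ℝ) else 0) * pd d (pd c (divg V)) x) := by
      rw [hfun a b]; exact hR _ _ _ a b c d x
    have h2 : pd b (pd a (pd d (fun y => V y c))) x
        = 1/(n:ℝ) * ((if d = c then (1:ℝ) else 0) * pd b (pd a (divg V)) x
          + (if a = c then (1:ℝ) else 0) * pd b (pd d (divg V)) x
          - (if a = d then (1:ℝ) else 0) * pd b (pd c (divg V)) x) := by
      rw [hfun a d]; exact hR _ _ _ a d c b x
    have h3 := pd3_comm (comp_contDiff hV.1 c) d a b x
    rw [h1, h2] at h3
    exact mul_left_cancel₀ (show (1/(n:ℝ)) ≠ 0 by simpa using hn0) h3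
  -- the master relation: for e ∉ {a, d},  σ2 d a = - δ_{ad} σ2 e e
  have hstar : ∀ (a d e : Fin n), e ≠ a → e ≠ d →
      pd d (pd a (divg V)) x = -(if a = d then (1:ℝ) else 0) * pd e (pd e (divg V)) x := by
    intro a d e hea hed
    have h := key a e e d x
    rw [if_pos rfl, if_neg (Ne.symm hea), if_neg (Ne.symm hed)] at h
    linarith [h]
  by_cases had : a = d
  · subst had
    obtain ⟨e, hea, -⟩ := exists_third hn a a
    obtain ⟨f, hfa, hfe⟩ := exists_third hn a e
    have h1 := hstar a a e hea hea
    have h2 := hstar e e f hfe hfe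
    have h3 := hstar a a f hfa hfa
    simp only [if_pos rfl, if_true, ite_true, neg_mul, one_mul] at h1 h2 h3
    linarith
  · obtain ⟨e, hea, hed⟩ := exists_third hn a d
    have h1 := hstar a d e hea hed
    simp only [if_neg had, neg_mul, zero_mul, neg_zero] at h1
    exact h1

end CKVaux


open CKVaux

/-- For conformal Killing vectors `V, W` on ℝⁿ (n ≥ 3), the pairing `⟨V,W⟩` is a
constant function. -/
theorem stmt_13 (n : ℕ) (hn : 3 ≤ n) (V W : (Fin n → ℝ) → (Fin n → ℝ))
    (hV : IsCKV n V) (hW : IsCKV n W) :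
    ∃ c : ℝ, ∀ x : Fin n → ℝ, pairing V W x = c := by
  have hn0 : ((n:ℝ)) ≠ 0 := by
    simp only [ne_eq, Nat.cast_eq_zero]; omega
  have hσ : ContDiff ℝ (⊤ : ℕ∞) (divg V) := divg_contDiff hV.1
  have hτ : ContDiff ℝ (⊤ : ℕ∞) (divg W) := divg_contDiff hW.1
  have hVa : ∀ a : Fin n, ContDiff ℝ (⊤ : ℕ∞) (fun y => V y a) := comp_contDiff hV.1
  have hWa : ∀ a : Fin n, ContDiff ℝ (⊤ : ℕ∞) (fun y => W y a) := comp_contDiff hW.1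
  have hdVa : ∀ a b : Fin n, ContDiff ℝ (⊤ : ℕ∞) (pd b (fun y => V y a)) :=
    fun a b => pd_contDiff (hVa a) b
  have hdWa : ∀ a b : Fin n, ContDiff ℝ (⊤ : ℕ∞) (pd b (fun y => W y a)) :=
    fun a b => pd_contDiff (hWa a) b
  have hdσ : ∀ a : Fin n, ContDiff ℝ (⊤ : ℕ∞) (pd a (divg V)) := pd_contDiff hσ
  have hdτ : ∀ a : Fin n, ContDiff ℝ (⊤ : ℕ∞) (pd a (divg W)) := pd_contDiff hτ
  -- smoothness of the four pieces
  have hAcd : ContDiff ℝ (⊤ : ℕ∞) (fun y => ∑ a, ∑ b,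
      pd b (fun z => V z a) y * pd a (fun z => W z b) y) :=
    ContDiff.sum fun a _ => ContDiff.sum fun b _ => (hdVa a b).mul (hdWa b a)
  have hBcd : ContDiff ℝ (⊤ : ℕ∞) (fun y => ((n:ℝ) - 2)/(n:ℝ)^2 * divg V y * divg W y) :=
    (contDiff_const.mul hσ).mul hτ
  have hCcd : ContDiff ℝ (⊤ : ℕ∞) (fun y => 2/(n:ℝ) * ∑ a, V y a * pd a (divg W) y) :=
    contDiff_const.mul (ContDiff.sum fun a _ => (hVa a).mul (hdτ a))
  have hDcd : ContDiff ℝ (⊤ : ℕ∞) (fun y => 2/(n:ℝ) * ∑ a, W y a * pd a (divg V) y) :=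
    contDiff_const.mul (ContDiff.sum fun a _ => (hWa a).mul (hdσ a))
  have hpcd : ContDiff ℝ (⊤ : ℕ∞) (pairing V W) := ((hAcd.sub hBcd).sub hCcd).sub hDcd
  -- partial derivatives vanish
  have hpd0 : ∀ (c : Fin n) (x : Fin n → ℝ), pd c (pairing V W) x = 0 := by
    intro c x
    have step1 : pd c (pairing V W) x
        = pd c (fun y => ∑ a, ∑ b, pd b (fun z => V z a) y * pd a (fun z => W z b) y) x
          - pd c (fun y => ((n:ℝ) - 2)/(n:ℝ)^2 * divg V y * divg W y) x
          - pd c (fun y => 2/(n:ℝ) * ∑ a, V y a * pd a (divg W) y) x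
          - pd c (fun y => 2/(n:ℝ) * ∑ a, W y a * pd a (divg V) y) x := by
      have e1 : pairing V W = fun y =>
          ((fun y => ∑ a, ∑ b, pd b (fun z => V z a) y * pd a (fun z => W z b) y) y
            - (fun y => ((n:ℝ) - 2)/(n:ℝ)^2 * divg V y * divg W y) y
            - (fun y => 2/(n:ℝ) * ∑ a, V y a * pd a (divg W) y) y)
          - (fun y => 2/(n:ℝ) * ∑ a, W y a * pd a (divg V) y) y := rfl
      rw [e1, pd_sub (((hAcd.sub hBcd).differentiable (by simp) x).fun_sub
          (hCcd.differentiable (by simp) x)) (hDcd.differentiable (by simp) x) c]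
      rw [pd_sub ((hAcd.sub hBcd).differentiable (by simp) x) (hCcd.differentiable (by simp) x) c]
      rw [pd_sub (hAcd.differentiable (by simp) x) (hBcd.differentiable (by simp) x) c]
    have hA : pd c (fun y => ∑ a, ∑ b,
        pd b (fun z => V z a) y * pd a (fun z => W z b) y) x
        = ∑ a, ∑ b, (pd c (pd b (fun z => V z a)) x * pd a (fun z => W z b) x
            + pd b (fun z => V z a) x * pd c (pd a (fun z => W z b)) x) := by
      rw [pd_sum Finset.univ (fun a _ => (ContDiff.sum fun b _ =>
        (hdVa a b).mul (hdWa b a)).differentiable (by simp) x) c]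
      refine Finset.sum_congr rfl fun a _ => ?_
      rw [pd_sum Finset.univ (fun b _ =>
        ((hdVa a b).mul (hdWa b a)).differentiable (by simp) x) c]
      refine Finset.sum_congr rfl fun b _ => ?_
      exact pd_mul ((hdVa a b).differentiable (by simp) x)
        ((hdWa b a).differentiable (by simp) x) c
    have hB : pd c (fun y => ((n:ℝ) - 2)/(n:ℝ)^2 * divg V y * divg W y) x
        = ((n:ℝ) - 2)/(n:ℝ)^2 * (pd c (divg V) x * divg W x
            + divg V x * pd c (divg W) x) := by
      rw [pd_mul ((contDiff_const.mul hσ).differentiable (by simp) x)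
        (hτ.differentiable (by simp) x) c]
      rw [pd_const_mul (hσ.differentiable (by simp) x) _ c]
      ring
    have hC : pd c (fun y => 2/(n:ℝ) * ∑ a, V y a * pd a (divg W) y) x
        = 2/(n:ℝ) * ∑ a, pd c (fun z => V z a) x * pd a (divg W) x := by
      rw [pd_const_mul ((ContDiff.sum fun a _ =>
        (hVa a).mul (hdτ a)).differentiable (by simp) x) _ c]
      rw [pd_sum Finset.univ (fun a _ =>
        ((hVa a).mul (hdτ a)).differentiable (by simp) x) c]
      congr 1
      refine Finset.sum_congr rfl fun a _ => ?_
      rw [pd_mul ((hVa a).differentiable (by simp) x) ((hdτ a).differentiable (by simp) x) c,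
        ckv_sigma2 hW hn c a x]
      ring
    have hD : pd c (fun y => 2/(n:ℝ) * ∑ a, W y a * pd a (divg V) y) x
        = 2/(n:ℝ) * ∑ a, pd c (fun z => W z a) x * pd a (divg V) x := by
      rw [pd_const_mul ((ContDiff.sum fun a _ =>
        (hWa a).mul (hdσ a)).differentiable (by simp) x) _ c]
      rw [pd_sum Finset.univ (fun a _ =>
        ((hWa a).mul (hdσ a)).differentiable (by simp) x) c]
      congr 1
      refine Finset.sum_congr rfl fun a _ => ?_
      rw [pd_mul ((hWa a).differentiable (by simp) x) ((hdσ a).differentiable (by simp) x) c,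
        ckv_sigma2 hV hn c a x]
      ring
    rw [step1, hA, hB, hC, hD]
    -- substitute the second-derivative formulas
    have hsubst : ∀ a b : Fin n,
        pd c (pd b (fun z => V z a)) x * pd a (fun z => W z b) x
          + pd b (fun z => V z a) x * pd c (pd a (fun z => W z b)) x
        = 1 / (n : ℝ) * ((if b = a then (1:ℝ) else 0) * pd c (divg V) x
            + (if c = a then (1:ℝ) else 0) * pd b (divg V) x
            - (if c = b then (1:ℝ) else 0) * pd a (divg V) x) * pd a (fun z => W z b) x
          + pd b (fun z => V z a) x * (1 / (n : ℝ) * ((if a = b then (1:ℝ) else 0) * pd c (divg W) x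
            + (if c = b then (1:ℝ) else 0) * pd a (divg W) x
            - (if c = a then (1:ℝ) else 0) * pd b (divg W) x)) := by
      intro a b
      rw [ckv_S hV c b a x, ckv_S hW c a b x]
    simp only [hsubst]
    simp only [mul_ite, mul_one, mul_zero, ite_mul, zero_mul, one_mul, mul_add, mul_sub,
      add_mul, sub_mul, Finset.sum_add_distrib, Finset.sum_sub_distrib,
      Finset.sum_ite_eq, Finset.sum_ite_eq', Finset.mem_univ, if_true, ← Finset.mul_sum,
      Finset.sum_ite_irrel, Finset.sum_const_zero]
    -- canonicalize the sums
    have hTdiv : ∑ i : Fin n, pd i (fun z => W z i) x = divg W x := rfl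
    have hA2 : (∑ b : Fin n, 1/(n:ℝ) * pd b (divg V) x * pd c (fun z => W z b) x)
        = 1/(n:ℝ) * ∑ b : Fin n, pd b (divg V) x * pd c (fun z => W z b) x := by
      rw [Finset.mul_sum]; exact Finset.sum_congr rfl fun b _ => by ring
    have hA3 : (∑ b : Fin n, 1/(n:ℝ) * pd b (divg V) x * pd b (fun z => W z c) x)
        = 1/(n:ℝ) * ∑ b : Fin n, pd b (divg V) x * pd b (fun z => W z c) x := by
      rw [Finset.mul_sum]; exact Finset.sum_congr rfl fun b _ => by ring
    have hA4 : (∑ b : Fin n, pd b (fun z => V z b) x * (1/(n:ℝ) * pd c (divg W) x))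
        = divg V x * (1/(n:ℝ) * pd c (divg W) x) := by
      rw [← Finset.sum_mul]; rfl
    have hA5 : (∑ b : Fin n, pd c (fun z => V z b) x * (1/(n:ℝ) * pd b (divg W) x))
        = 1/(n:ℝ) * ∑ b : Fin n, pd b (divg W) x * pd c (fun z => V z b) x := by
      rw [Finset.mul_sum]; exact Finset.sum_congr rfl fun b _ => by ring
    have hA6 : (∑ b : Fin n, pd b (fun z => V z c) x * (1/(n:ℝ) * pd b (divg W) x))
        = 1/(n:ℝ) * ∑ b : Fin n, pd b (divg W) x * pd b (fun z => V z c) x := by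
      rw [Finset.mul_sum]; exact Finset.sum_congr rfl fun b _ => by ring
    have hA7 : (∑ a : Fin n, pd c (fun z => V z a) x * pd a (divg W) x)
        = ∑ b : Fin n, pd b (divg W) x * pd c (fun z => V z b) x :=
      Finset.sum_congr rfl fun b _ => by ring
    have hA8 : (∑ a : Fin n, pd c (fun z => W z a) x * pd a (divg V) x)
        = ∑ b : Fin n, pd b (divg V) x * pd c (fun z => W z b) x :=
      Finset.sum_congr rfl fun b _ => by ring
    rw [hTdiv, hA2, hA3, hA4, hA5, hA6, hA7, hA8]
    -- CKV swap relations for the remaining sums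
    have hswapW : (∑ b : Fin n, pd b (divg V) x * pd c (fun z => W z b) x)
        = 2/(n:ℝ) * divg W x * pd c (divg V) x
          - ∑ b : Fin n, pd b (divg V) x * pd b (fun z => W z c) x := by
      have h1 : (∑ b : Fin n, pd b (divg V) x * pd c (fun z => W z b) x)
          + (∑ b : Fin n, pd b (divg V) x * pd b (fun z => W z c) x)
          = ∑ b : Fin n, pd b (divg V) x
              * (2/(n:ℝ) * divg W x * (if c = b then (1:ℝ) else 0)) := by
        rw [← Finset.sum_add_distrib]
        refine Finset.sum_congr rfl fun b _ => ?_
        rw [← hW.2 c b x]; ring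
      simp only [mul_ite, mul_one, mul_zero, Finset.sum_ite_eq, Finset.mem_univ,
        if_true] at h1
      linarith [h1]
    have hswapV : (∑ b : Fin n, pd b (divg W) x * pd c (fun z => V z b) x)
        = 2/(n:ℝ) * divg V x * pd c (divg W) x
          - ∑ b : Fin n, pd b (divg W) x * pd b (fun z => V z c) x := by
      have h1 : (∑ b : Fin n, pd b (divg W) x * pd c (fun z => V z b) x)
          + (∑ b : Fin n, pd b (divg W) x * pd b (fun z => V z c) x)
          = ∑ b : Fin n, pd b (divg W) x
              * (2/(n:ℝ) * divg V x * (if c = b then (1:ℝ) else 0)) := by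
        rw [← Finset.sum_add_distrib]
        refine Finset.sum_congr rfl fun b _ => ?_
        rw [← hV.2 c b x]; ring
      simp only [mul_ite, mul_one, mul_zero, Finset.sum_ite_eq, Finset.mem_univ,
        if_true] at h1
      linarith [h1]
    rw [hswapW, hswapV]
    field_simp
    ring
  -- conclude constancy
  have hdp : Differentiable ℝ (pairing V W) := hpcd.differentiable (by simp)
  have hf0 : ∀ x : Fin n → ℝ, fderiv ℝ (pairing V W) x = 0 := by
    intro x
    ext v
    have hv : ∑ i : Fin n, v i • (Pi.single i (1:ℝ) : Fin n → ℝ) = v := by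
      ext j
      simp [Finset.sum_apply, Pi.single_apply, mul_ite, Finset.sum_ite_eq, eq_comm]
    rw [ContinuousLinearMap.zero_apply, ← hv, map_sum]
    refine Finset.sum_eq_zero fun i _ => ?_
    rw [map_smul]
    have h0 := hpd0 i x
    simp only [pd] at h0
    rw [h0, smul_zero]
  refine ⟨pairing V W 0, fun x => ?_⟩
  exact is_const_of_fderiv_eq_zero hdp hf0 x 0
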